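/- arXiv:2201.11930 — 5 statements merged into one kernel-verified Lean document; each statement's English description precedes it below -/
import Mathlib

section
/- Let ξ ∈ S, let i ∈ {1,…,K}, let x ∈ Vᵢ, and let y, z ∈ V with {x,y} ∈ E and {y,z} ∈ E. Assume that ξ' := τ_{xy}ξ ∈ S and that the move from x is allowed in ξ (equivalently, p(ξ, ξ') > 0). Then τ_{yz}ξ' ∈ S and the move from y is allowed in ξ' (equivalently, p(ξ', τ_{yz}ξ') > 0). -/
open scoped Classical
open Finset

section MoneyExchange

variable {V : Type*} [Fintype V] [DecidableEq V] {K : ℕ}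

/-- Move one coin from `x` to `y`. -/
def tau (x y : V) (ξ : V → ℤ) : V → ℤ :=
  fun z => ξ z - (if z = x then 1 else 0) + (if z = y then 1 else 0)

/-- Total (nonpositive) debt of the customers of bank `i`:
`∑_{z ∈ Vᵢ} ξ(z) · 1{ξ(z) < 0}`. -/
def bankDebt (bank : V → Fin K) (ξ : V → ℤ) (i : Fin K) : ℤ :=
  ∑ z ∈ univ.filter fun z => bank z = i, min (ξ z) 0

/-- Admissible configurations: total money `M` and each bank lends at most `Rᵢ`. -/
def admissible (bank : V → Fin K) (R : Fin K → ℕ) (M : ℕ) (ξ : V → ℤ) : Prop :=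
  (∑ z, ξ z) = (M : ℤ) ∧ ∀ i, -(R i : ℤ) ≤ bankDebt bank ξ i

/-- The move from `x` is allowed in `ξ`: `x` has a coin or its bank is nonempty. -/
def allowed (bank : V → Fin K) (R : Fin K → ℕ) (ξ : V → ℤ) (x : V) : Prop :=
  0 < ξ x ∨ -(R (bank x) : ℤ) < bankDebt bank ξ (bank x)

/-- One-step transition probability of the money-exchange chain: each ordered
adjacent pair `(x, y)` is chosen with probability `1/(2|E|)`, and a coin moves
from `x` to `y` whenever the move from `x` is allowed; otherwise nothing happens. -/
noncomputable def step (G : SimpleGraph V) (bank : V → Fin K) (R : Fin K → ℕ)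
    (ξ ξ' : V → ℤ) : ℝ :=
  (((univ.filter fun pq : V × V =>
        G.Adj pq.1 pq.2 ∧ allowed bank R ξ pq.1 ∧ tau pq.1 pq.2 ξ = ξ').card : ℝ)
      + if ξ' = ξ then
          ((univ.filter fun pq : V × V =>
            G.Adj pq.1 pq.2 ∧ ¬ allowed bank R ξ pq.1).card : ℝ)
        else 0)
    / ((univ.filter fun pq : V × V => G.Adj pq.1 pq.2).card : ℝ)

/-- `t`-step transition probability of the money-exchange chain. -/
noncomputable def stepT (G : SimpleGraph V) (bank : V → Fin K) (R : Fin K → ℕ) :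
    ℕ → (V → ℤ) → (V → ℤ) → ℝ
  | 0, ξ, ξ' => if ξ = ξ' then 1 else 0
  | t + 1, ξ, ξ' =>
      ∑ η ∈ insert ξ ((univ.filter fun pq : V × V => G.Adj pq.1 pq.2).image
          fun pq => tau pq.1 pq.2 ξ),
        step G bank R ξ η * stepT G bank R t η ξ'

end MoneyExchange


lemma debt_tau {V : Type*} [Fintype V] [DecidableEq V] {K : ℕ}
    (bank : V → Fin K) (ξ : V → ℤ) {x y : V} (hxy : x ≠ y) (i : Fin K) :
    bankDebt bank (tau x y ξ) i = bankDebt bank ξ i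
      + (if bank x = i then min (ξ x - 1) 0 - min (ξ x) 0 else 0)
      + (if bank y = i then min (ξ y + 1) 0 - min (ξ y) 0 else 0) := by
  have key : ∀ w, min (tau x y ξ w) 0 = min (ξ w) 0
      + ((if w = x then min (ξ x - 1) 0 - min (ξ x) 0 else 0)
      + (if w = y then min (ξ y + 1) 0 - min (ξ y) 0 else 0)) := by
    intro w
    by_cases hx : w = x <;> by_cases hy : w = y <;> simp_all [tau] <;> ring
  unfold bankDebt
  simp only [key, Finset.sum_add_distrib, Finset.sum_ite_eq', Finset.mem_filter,
    Finset.mem_univ, true_and]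
  split_ifs <;> ring

lemma tau_admissible {V : Type*} [Fintype V] [DecidableEq V] {K : ℕ}
    {bank : V → Fin K} {R : Fin K → ℕ} {M : ℕ} {ξ : V → ℤ} {x y : V}
    (hξ : admissible bank R M ξ) (hx : allowed bank R ξ x) (hxy : x ≠ y) :
    admissible bank R M (tau x y ξ) := by
  constructor
  · simp [tau, Finset.sum_add_distrib, Finset.sum_sub_distrib, Finset.sum_ite_eq',
      hξ.1]
  · intro i
    rw [debt_tau bank ξ hxy i]
    have hd := hξ.2 i
    set A := (if bank x = i then min (ξ x - 1) 0 - min (ξ x) 0 else 0) with hA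
    set B := (if bank y = i then min (ξ y + 1) 0 - min (ξ y) 0 else 0) with hB
    have hb : 0 ≤ B := by
      rw [hB]; split
      · simp only [min_def]; split_ifs <;> omega
      · omega
    by_cases hbi : bank x = i
    · rcases hx with hpos | hdebt
      · have ha : A = 0 := by
          rw [hA, if_pos hbi]
          simp only [min_def]; split_ifs <;> omega
        omega
      · rw [hbi] at hdebt
        have ha : -1 ≤ A := by
          rw [hA]; split
          · simp only [min_def]; split_ifs <;> omega
          · omega
        omega
    · have ha : A = 0 := by rw [hA, if_neg hbi]
      omega

theorem move_edge {V : Type*} [Fintype V] [DecidableEq V] {K : ℕ} (hK : 1 ≤ K)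
    (G : SimpleGraph V) (hG : G.Connected) (hN : 2 ≤ Fintype.card V)
    (bank : V → Fin K) (R : Fin K → ℕ) (M : ℕ)
    (ξ : V → ℤ) (hξ : admissible bank R M ξ)
    (x y z : V) (hxy : G.Adj x y) (hyz : G.Adj y z)
    (hξ' : admissible bank R M (tau x y ξ))
    (hmove : allowed bank R ξ x) :
    admissible bank R M (tau y z (tau x y ξ)) ∧ allowed bank R (tau x y ξ) y := by
  have hxny : x ≠ y := hxy.ne
  have hyny : y ≠ z := hyz.ne
  have hally : allowed bank R (tau x y ξ) y := by
    by_cases hy : 0 ≤ ξ y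
    · left
      have : tau x y ξ y = ξ y + 1 := by
        simp [tau, Ne.symm hxny]
      rw [this]; omega
    · right
      rw [debt_tau bank ξ hxny (bank y)]
      have hneg : ξ y < 0 := by omega
      have hd := hξ.2 (bank y)
      set A := (if bank x = bank y then min (ξ x - 1) 0 - min (ξ x) 0 else 0) with hA
      set B := (if bank y = bank y then min (ξ y + 1) 0 - min (ξ y) 0 else 0) with hB
      have hbb : B = 1 := by
        rw [hB, if_pos rfl]
        simp only [min_def]; split_ifs <;> omega
      rcases hmove with hpos | hdebt
      · have ha : A = 0 := by
          rw [hA]; split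
          · simp only [min_def]; split_ifs <;> omega
          · rfl
        omega
      · by_cases hbx : bank x = bank y
        · rw [hbx] at hdebt
          have ha : -1 ≤ A := by
            rw [hA]; split
            · simp only [min_def]; split_ifs <;> omega
            · omega
          omega
        · have ha : A = 0 := by rw [hA, if_neg hbx]
          omega
  exact ⟨tau_admissible hξ' hally hyny, hally⟩
end

section
/- Assume M ≥ 1. Let ξ ∈ S and let x, y ∈ V be distinct vertices such that τ_{xy}ξ ∈ S. Then there exists an integer t with 1 ≤ t < 2N such that p_t(ξ, τ_{xy}ξ) > 0. -/
open scoped Classical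
open Finset

section Aux

variable {V : Type*} [Fintype V] [DecidableEq V] {K : ℕ}

lemma tau_self (s : V) (ξ : V → ℤ) : tau s s ξ = ξ := by
  funext z; simp [tau]

lemma tau_tau (s u w : V) (ξ : V → ℤ) : tau u w (tau s u ξ) = tau s w ξ := by
  funext z; simp only [tau]; ring

lemma tau_apply_ne (s v : V) (ξ : V → ℤ) (h : v ≠ s) : tau s v ξ v = ξ v + 1 := by
  simp [tau, h]

lemma sum_tau (a b : V) (ξ : V → ℤ) : (∑ z, tau a b ξ z) = ∑ z, ξ z := by
  simp only [tau]
  rw [Finset.sum_add_distrib, Finset.sum_sub_distrib]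
  simp

lemma bankDebt_tau (bank : V → Fin K) (ξ : V → ℤ) {a b : V} (hab : a ≠ b) (i : Fin K) :
    bankDebt bank (tau a b ξ) i = bankDebt bank ξ i
      + (if bank a = i then min (ξ a - 1) 0 - min (ξ a) 0 else 0)
      + (if bank b = i then min (ξ b + 1) 0 - min (ξ b) 0 else 0) := by
  unfold bankDebt
  have key : ∀ z ∈ univ.filter fun z => bank z = i,
      min (tau a b ξ z) 0 = min (ξ z) 0
        + (if z = a then min (ξ a - 1) 0 - min (ξ a) 0 else 0)
        + (if z = b then min (ξ b + 1) 0 - min (ξ b) 0 else 0) := by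
    intro z _
    by_cases hza : z = a
    · subst hza
      simp [tau, hab]
    · by_cases hzb : z = b
      · subst hzb
        simp [tau, hza]
      · simp [tau, hza, hzb]
  rw [Finset.sum_congr rfl key, Finset.sum_add_distrib, Finset.sum_add_distrib,
    Finset.sum_ite_eq' _ a, Finset.sum_ite_eq' _ b]
  simp [Finset.mem_filter]

lemma step_nonneg (G : SimpleGraph V) (bank : V → Fin K) (R : Fin K → ℕ)
    (ξ ξ' : V → ℤ) : 0 ≤ step G bank R ξ ξ' := by
  unfold step
  apply div_nonneg _ (by positivity)
  have : (0:ℝ) ≤ if ξ' = ξ then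
      ((univ.filter fun pq : V × V =>
        G.Adj pq.1 pq.2 ∧ ¬ allowed bank R ξ pq.1).card : ℝ) else 0 := by
    split <;> positivity
  positivity

lemma stepT_nonneg (G : SimpleGraph V) (bank : V → Fin K) (R : Fin K → ℕ)
    (t : ℕ) (ξ ξ' : V → ℤ) : 0 ≤ stepT G bank R t ξ ξ' := by
  induction t generalizing ξ with
  | zero => unfold stepT; split <;> norm_num
  | succ t ih =>
    unfold stepT
    exact Finset.sum_nonneg fun η _ =>
      mul_nonneg (step_nonneg G bank R ξ η) (ih η)

lemma step_pos (G : SimpleGraph V) (bank : V → Fin K) (R : Fin K → ℕ)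
    {ξ : V → ℤ} {a b : V} (hadj : G.Adj a b) (hal : allowed bank R ξ a) :
    0 < step G bank R ξ (tau a b ξ) := by
  unfold step
  apply div_pos
  · have hmem : (a, b) ∈ univ.filter fun pq : V × V =>
        G.Adj pq.1 pq.2 ∧ allowed bank R ξ pq.1 ∧ tau pq.1 pq.2 ξ = tau a b ξ := by
      simp [hadj, hal]
    have h1 : 0 < ((univ.filter fun pq : V × V =>
        G.Adj pq.1 pq.2 ∧ allowed bank R ξ pq.1 ∧ tau pq.1 pq.2 ξ = tau a b ξ).card : ℝ) := by
      exact_mod_cast Finset.card_pos.2 ⟨_, hmem⟩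
    have h2 : (0:ℝ) ≤ if tau a b ξ = ξ then
        ((univ.filter fun pq : V × V =>
          G.Adj pq.1 pq.2 ∧ ¬ allowed bank R ξ pq.1).card : ℝ) else 0 := by
      split <;> positivity
    linarith
  · have hmem : (a, b) ∈ univ.filter fun pq : V × V => G.Adj pq.1 pq.2 := by simp [hadj]
    exact_mod_cast Finset.card_pos.2 ⟨_, hmem⟩

lemma stepT_succ_pos (G : SimpleGraph V) (bank : V → Fin K) (R : Fin K → ℕ)
    {ξ ξ' : V → ℤ} {a b : V} {t : ℕ} (hadj : G.Adj a b) (hal : allowed bank R ξ a)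
    (h : 0 < stepT G bank R t (tau a b ξ) ξ') :
    0 < stepT G bank R (t + 1) ξ ξ' := by
  show 0 < ∑ η ∈ insert ξ ((univ.filter fun pq : V × V => G.Adj pq.1 pq.2).image
      fun pq => tau pq.1 pq.2 ξ), step G bank R ξ η * stepT G bank R t η ξ'
  apply Finset.sum_pos'
  · intro η _
    exact mul_nonneg (step_nonneg G bank R ξ η) (stepT_nonneg G bank R t η ξ')
  · refine ⟨tau a b ξ, ?_, ?_⟩
    · apply Finset.mem_insert_of_mem
      exact Finset.mem_image.2 ⟨(a, b), by simp [hadj], rfl⟩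
    · exact mul_pos (step_pos G bank R hadj hal) h

lemma stepT_add_pos (G : SimpleGraph V) (bank : V → Fin K) (R : Fin K → ℕ)
    {a b : ℕ} {ξ η ζ : V → ℤ} (h1 : 0 < stepT G bank R a ξ η)
    (h2 : 0 < stepT G bank R b η ζ) : 0 < stepT G bank R (a + b) ξ ζ := by
  induction a generalizing ξ with
  | zero =>
    have : ξ = η := by
      by_contra hne
      simp [stepT, hne] at h1
    subst this
    simpa using h2
  | succ a ih =>
    have h1' : 0 < ∑ ρ ∈ insert ξ ((univ.filter fun pq : V × V => G.Adj pq.1 pq.2).image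
        fun pq => tau pq.1 pq.2 ξ), step G bank R ξ ρ * stepT G bank R a ρ η := h1
    obtain ⟨ρ, hρmem, hρpos⟩ : ∃ ρ ∈ insert ξ ((univ.filter fun pq : V × V =>
        G.Adj pq.1 pq.2).image fun pq => tau pq.1 pq.2 ξ),
        0 < step G bank R ξ ρ * stepT G bank R a ρ η := by
      by_contra hc; push_neg at hc
      exact absurd (Finset.sum_nonpos hc) (by linarith)
    have hstep : 0 < step G bank R ξ ρ := by
      rcases lt_or_eq_of_le (step_nonneg G bank R ξ ρ) with h | h
      · exact h
      · exfalso; rw [← h] at hρpos; simp at hρpos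
    have hT : 0 < stepT G bank R a ρ η := by
      rcases lt_or_eq_of_le (stepT_nonneg G bank R a ρ η) with h | h
      · exact h
      · exfalso; rw [← h] at hρpos; simp at hρpos
    have key : 0 < stepT G bank R (a + b) ρ ζ := ih hT
    have : a + 1 + b = (a + b) + 1 := by omega
    rw [this]
    show 0 < ∑ ρ' ∈ insert ξ ((univ.filter fun pq : V × V => G.Adj pq.1 pq.2).image
        fun pq => tau pq.1 pq.2 ξ), step G bank R ξ ρ' * stepT G bank R (a + b) ρ' ζ
    apply Finset.sum_pos'
    · intro η' _
      exact mul_nonneg (step_nonneg G bank R ξ η') (stepT_nonneg G bank R (a+b) η' ζ)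
    · exact ⟨ρ, hρmem, mul_pos hstep key⟩

lemma mid_allowed {bank : V → Fin K} {R : Fin K → ℕ} {M : ℕ} {ξ : V → ℤ}
    (hadm : admissible bank R M ξ) {s : V} (hs : allowed bank R ξ s) :
    ∀ v, v ≠ s → allowed bank R (tau s v ξ) v := by
  intro v hv
  by_cases h0 : 0 ≤ ξ v
  · left
    rw [tau_apply_ne s v ξ hv]
    omega
  · right
    push_neg at h0
    rw [bankDebt_tau bank ξ (Ne.symm hv) (bank v)]
    have hvmin : min (ξ v + 1) 0 - min (ξ v) 0 = 1 := by omega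
    have hadm2 := hadm.2 (bank v)
    rcases hs with hs | hs
    · have hsmin : min (ξ s - 1) 0 - min (ξ s) 0 = 0 := by omega
      simp only [hvmin, hsmin, if_true]
      split_ifs <;> linarith
    · have hsmin : -1 ≤ min (ξ s - 1) 0 - min (ξ s) 0 := by omega
      simp only [hvmin, if_true]
      split_ifs with h
      · rw [← h] at hadm2 ⊢; linarith
      · linarith

lemma transport (G : SimpleGraph V) (bank : V → Fin K) (R : Fin K → ℕ)
    {s t : V} (W : G.Walk s t) :
    ∀ (ξ : V → ℤ), allowed bank R ξ s →
    (∀ v, v ≠ s → allowed bank R (tau s v ξ) v) →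
    0 < stepT G bank R W.length ξ (tau s t ξ) := by
  induction W with
  | nil =>
    intro ξ _ _
    rw [tau_self]
    simp [stepT]
  | @cons s u t hadj W ih =>
    intro ξ hs H
    rw [SimpleGraph.Walk.length_cons]
    apply stepT_succ_pos G bank R hadj hs
    have hu : allowed bank R (tau s u ξ) u := by
      by_cases h : u = s
      · subst h; rw [tau_self]; exact hs
      · exact H u h
    have H' : ∀ v, v ≠ u → allowed bank R (tau u v (tau s u ξ)) v := by
      intro v hv
      rw [tau_tau]
      by_cases h : v = s
      · subst h; rw [tau_self]; exact hs
      · exact H v h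
    have := ih (tau s u ξ) hu H'
    rwa [tau_tau] at this

end Aux

theorem move_path {V : Type*} [Fintype V] [DecidableEq V] {K : ℕ} (hK : 1 ≤ K)
    (G : SimpleGraph V) (hG : G.Connected) (hN : 2 ≤ Fintype.card V)
    (bank : V → Fin K) (R : Fin K → ℕ) (M : ℕ) (hM : 1 ≤ M)
    (ξ : V → ℤ) (hξ : admissible bank R M ξ)
    (x y : V) (hxy : x ≠ y)
    (hξ' : admissible bank R M (tau x y ξ)) :
    ∃ t : ℕ, 1 ≤ t ∧ t < 2 * Fintype.card V ∧
      0 < stepT G bank R t ξ (tau x y ξ) := by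
  by_cases hax : allowed bank R ξ x
  · -- direct path from x to y
    obtain ⟨W⟩ := hG.preconnected x y
    let p := W.toPath
    have hlen : (p : G.Walk x y).length < Fintype.card V := p.2.length_lt
    have hpos : 1 ≤ (p : G.Walk x y).length := by
      rcases Nat.eq_zero_or_pos (p : G.Walk x y).length with h | h
      · exact absurd ((p : G.Walk x y).eq_of_length_eq_zero h) hxy
      · exact h
    refine ⟨(p : G.Walk x y).length, hpos, by omega, ?_⟩
    exact transport G bank R (p : G.Walk x y) ξ hax (mid_allowed hξ hax)
  · -- x is blocked: ξ x ≤ 0 and bank x is at its credit limit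
    unfold allowed at hax
    push_neg at hax
    obtain ⟨hx0, hxd⟩ := hax
    have hxd' : bankDebt bank ξ (bank x) = -(R (bank x) : ℤ) :=
      le_antisymm hxd (hξ.2 (bank x))
    -- deduce bank y = bank x and ξ y < 0
    have hform := bankDebt_tau bank ξ hxy (bank x)
    have hx1 : min (ξ x - 1) 0 - min (ξ x) 0 = -1 := by omega
    have hadm' := hξ'.2 (bank x)
    rw [hform, hxd', hx1, if_pos rfl] at hadm'
    have hby2 : bank y = bank x ∧ ξ y < 0 := by
      constructor
      · by_contra h
        rw [if_neg h] at hadm'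
        omega
      · by_contra h
        push_neg at h
        have : min (ξ y + 1) 0 - min (ξ y) 0 = 0 := by omega
        split_ifs at hadm' <;> omega
    obtain ⟨hby, hy0⟩ := hby2
    -- find a vertex with a coin
    have hw : ∃ w, 0 < ξ w := by
      by_contra h
      push_neg at h
      have h1 : (∑ z, ξ z) ≤ 0 := Finset.sum_nonpos fun z _ => h z
      rw [hξ.1] at h1
      have : (1:ℤ) ≤ (M:ℤ) := by exact_mod_cast hM
      omega
    obtain ⟨w, hw⟩ := hw
    have hwx : w ≠ x := fun h => by rw [h] at hw; omega
    have hwy : w ≠ y := fun h => by rw [h] at hw; omega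
    -- stage 1: move a coin from w to y
    obtain ⟨W1⟩ := hG.preconnected w y
    let p1 := W1.toPath
    have hl1 : (p1 : G.Walk w y).length < Fintype.card V := p1.2.length_lt
    have hp1 : 1 ≤ (p1 : G.Walk w y).length := by
      rcases Nat.eq_zero_or_pos (p1 : G.Walk w y).length with h | h
      · exact absurd ((p1 : G.Walk w y).eq_of_length_eq_zero h) hwy
      · exact h
    have haw : allowed bank R ξ w := Or.inl hw
    have T1 : 0 < stepT G bank R (p1 : G.Walk w y).length ξ (tau w y ξ) :=
      transport G bank R (p1 : G.Walk w y) ξ haw (mid_allowed hξ haw)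
    set η := tau w y ξ with hη
    have hwmin : min (ξ w - 1) 0 - min (ξ w) 0 = 0 := by omega
    have hymin : min (ξ y + 1) 0 - min (ξ y) 0 = 1 := by omega
    -- η is admissible
    have hηadm : admissible bank R M η := by
      constructor
      · rw [hη, sum_tau]; exact hξ.1
      · intro i
        rw [hη, bankDebt_tau bank ξ hwy i, hwmin, hymin]
        have := hξ.2 i
        split_ifs <;> omega
    -- the move from x is allowed in η
    have hηx : allowed bank R η x := by
      right
      rw [hη, bankDebt_tau bank ξ hwy (bank x), hwmin, hymin, if_pos hby, hxd']
      split_ifs <;> omega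
    -- stage 2: move the coin from x to w
    obtain ⟨W2⟩ := hG.preconnected x w
    let p2 := W2.toPath
    have hl2 : (p2 : G.Walk x w).length < Fintype.card V := p2.2.length_lt
    have T2 : 0 < stepT G bank R (p2 : G.Walk x w).length η (tau x w η) :=
      transport G bank R (p2 : G.Walk x w) η hηx (mid_allowed hηadm hηx)
    have hcomp : tau x w η = tau x y ξ := by
      rw [hη]; funext z; simp only [tau]; ring
    rw [hcomp] at T2
    refine ⟨(p1 : G.Walk w y).length + (p2 : G.Walk x w).length, by omega, by omega, ?_⟩
    exact stepT_add_pos G bank R T1 T2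
end

section
/- The total number of admissible configurations equals |S| = Λ((N₁, …, N_K), (R₁, …, R_K), M). -/
open scoped Classical
open Finset

/-- Binomial coefficient `C(a−1, b−1)` with the conventions: equal to `1` when
`a = b = 0`, to `0` when exactly one of `a`, `b` is `0`, and to `0` when
`b − 1 > a − 1`. -/
def ccat (a b : ℕ) : ℕ :=
  if a = 0 ∧ b = 0 then 1 else if a = 0 ∨ b = 0 then 0 else (a - 1).choose (b - 1)

/-- Binomial coefficient `C(s, t)` for integers `s`, `t`, equal to `0` whenever
`t < 0` or `t > s`. -/
def chooseZ (s t : ℤ) : ℕ :=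
  if 0 ≤ t ∧ t ≤ s then s.toNat.choose t.toNat else 0

/-- The counting function `Λ(n, r, m)`. -/
def Lambda {K : ℕ} (n r : Fin K → ℕ) (m : ℤ) : ℕ :=
  ∑ a ∈ Fintype.piFinset fun i : Fin K => Finset.range (r i + 1),
    ∑ b ∈ Fintype.piFinset fun i : Fin K => Finset.range (n i + 1),
      (∏ i, (n i).choose (b i) * ccat (a i) (b i)) *
        chooseZ (m + (∑ i, (a i : ℤ)) + (∑ i, (n i : ℤ)) - (∑ i, (b i : ℤ)) - 1)
                ((∑ i, (n i : ℤ)) - (∑ i, (b i : ℤ)) - 1)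

/-!
Split a configuration `ξ` into its debts `q = ξ⁻` and its holdings `p = ξ⁺`. Given `q`, the
holdings are an arbitrary distribution of `M + ∑ q` coins over the customers without debt, so by
stars and bars there are `C(M + ∑ q + N - |supp q| - 1, N - |supp q| - 1)` of them. This number
only depends on the bank profile of `q`: the total debt `aᵢ` and the number `bᵢ` of indebted
customers of each bank. The debt vectors with a given profile are chosen bank by bank: the
indebted customers in `C(Nᵢ, bᵢ)` ways, then a composition of `aᵢ` into `bᵢ` positive parts
in `C(aᵢ - 1, bᵢ - 1)` ways.
-/

theorem ccat_eq_multichoose {a b : ℕ} (h : b ≤ a) : ccat a b = b.multichoose (a - b) := by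
  rcases b with _ | b
  · rcases a with _ | a <;> simp [ccat, Nat.multichoose_zero_succ]
  · rw [Nat.multichoose_eq, ccat, if_neg (by omega), if_neg (by omega),
      show b + 1 + (a - (b + 1)) - 1 = a - 1 by omega]
    exact Nat.choose_symm_of_eq_add (by omega)

theorem ccat_eq_zero_of_lt {a b : ℕ} (h : a < b) : ccat a b = 0 := by
  rw [ccat, if_neg (by omega)]
  split_ifs
  · rfl
  · exact Nat.choose_eq_zero_of_lt (by omega)

theorem le_of_ccat_ne_zero {a b : ℕ} (h : ccat a b ≠ 0) : b ≤ a := by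
  by_contra! hab
  exact h (ccat_eq_zero_of_lt hab)

theorem multichoose_eq_chooseZ {d m : ℕ} (h : d ≠ 0 ∨ m ≠ 0) :
    d.multichoose m = chooseZ ((m : ℤ) + d - 1) ((d : ℤ) - 1) := by
  rcases d with _ | d
  · obtain ⟨m, rfl⟩ := Nat.exists_eq_succ_of_ne_zero (h.resolve_left (by simp))
    simp [Nat.multichoose_zero_succ, chooseZ]
  · rw [Nat.multichoose_eq, chooseZ, if_pos (by omega)]
    push_cast
    rw [show ((m : ℤ) + (d + 1) - 1).toNat = d + m by omega,
      show ((d : ℤ) + 1 - 1).toNat = d by omega, show d + 1 + m - 1 = d + m by omega,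
      Nat.choose_symm_add]

namespace Finset

variable {ι : Type*} [DecidableEq ι]

theorem card_piAntidiag_nat (s : Finset ι) (n : ℕ) :
    #(s.piAntidiag n) = (#s).multichoose n := by
  rw [← card_finsuppAntidiag_nat_eq_multichoose]
  simp [finsuppAntidiag]

theorem card_filter_piAntidiag_forall_ne_zero (s : Finset ι) (n : ℕ) :
    #{f ∈ s.piAntidiag n | ∀ i ∈ s, f i ≠ 0} = ccat n #s := by
  rcases lt_or_ge n #s with hlt | hle
  · rw [ccat_eq_zero_of_lt hlt, card_eq_zero, filter_eq_empty_iff]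
    intro f hf hpos
    rw [mem_piAntidiag] at hf
    have := card_nsmul_le_sum s f 1 fun i hi => Nat.one_le_iff_ne_zero.2 (hpos i hi)
    simp only [smul_eq_mul, mul_one] at this
    omega
  rw [ccat_eq_multichoose hle, ← card_piAntidiag_nat]
  refine card_nbij' (fun f i => f i - 1) (fun g i => g i + if i ∈ s then 1 else 0) ?_ ?_ ?_ ?_
  · intro f hf
    simp only [coe_filter, Set.mem_ofPred_eq, mem_coe, mem_piAntidiag] at hf ⊢
    obtain ⟨⟨hsum, hsupp⟩, hpos⟩ := hf
    refine ⟨?_, fun i hi => hsupp i (by omega)⟩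
    rw [sum_tsub_distrib _ fun i hi => Nat.one_le_iff_ne_zero.2 (hpos i hi)]
    simp [hsum]
  · intro g hg
    simp only [coe_filter, Set.mem_ofPred_eq, mem_coe, mem_piAntidiag] at hg ⊢
    obtain ⟨hsum, hsupp⟩ := hg
    refine ⟨⟨?_, fun i hi => ?_⟩, fun i hi => by simp [hi]⟩
    · rw [sum_add_distrib, hsum, sum_ite_mem, inter_self, sum_const, smul_eq_mul, mul_one]
      omega
    · by_contra his
      exact his (hsupp i (by simpa [his] using hi))
  · intro f hf
    simp only [coe_filter, Set.mem_ofPred_eq, mem_piAntidiag] at hf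
    funext i
    by_cases hi : i ∈ s
    · have := hf.2 i hi
      simp only [hi, if_true]
      omega
    · simp [hi, not_imp_comm.1 (hf.1.2 i) hi]
  · intro g hg
    simp only [mem_coe, mem_piAntidiag] at hg
    funext i
    by_cases hi : i ∈ s
    · simp [hi]
    · simp [hi, not_imp_comm.1 (hg.2 i) hi]

theorem filter_piAntidiag_support_eq {s t : Finset ι} (hts : t ⊆ s) (n : ℕ) :
    {f ∈ s.piAntidiag n | {i ∈ s | f i ≠ 0} = t} =
      {f ∈ t.piAntidiag n | ∀ i ∈ t, f i ≠ 0} := by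
  ext f
  simp only [mem_filter, mem_piAntidiag]
  constructor
  · rintro ⟨⟨hsum, hsupp⟩, rfl⟩
    refine ⟨⟨?_, fun i hi => mem_filter.2 ⟨?_, hi⟩⟩, fun i hi => (mem_filter.1 hi).2⟩
    · rwa [sum_filter_ne_zero]
    · exact hsupp i hi
  · rintro ⟨⟨hsum, hsupp⟩, hpos⟩
    have ht : {i ∈ s | f i ≠ 0} = t := by
      ext i
      simp only [mem_filter]
      exact ⟨fun h => hsupp i h.2, fun h => ⟨hts h, hpos i h⟩⟩
    refine ⟨⟨?_, fun i hi => hts (hsupp i hi)⟩, ht⟩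
    rw [← sum_filter_ne_zero, ht, hsum]

theorem card_filter_piAntidiag_card_support (s : Finset ι) (n k : ℕ) :
    #{f ∈ s.piAntidiag n | #{i ∈ s | f i ≠ 0} = k} = (#s).choose k * ccat n k := by
  have hmaps : ∀ f ∈ {f ∈ s.piAntidiag n | #{i ∈ s | f i ≠ 0} = k},
      {i ∈ s | f i ≠ 0} ∈ s.powersetCard k := fun f hf =>
    mem_powersetCard.2 ⟨filter_subset _ _, (mem_filter.1 hf).2⟩
  rw [card_eq_sum_card_fiberwise hmaps, ← card_powersetCard]
  refine sum_const_nat fun t ht => ?_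
  obtain ⟨hts, rfl⟩ := mem_powersetCard.1 ht
  rw [filter_filter, ← card_filter_piAntidiag_forall_ne_zero,
    ← filter_piAntidiag_support_eq hts]
  congr 1
  exact filter_congr fun f _ => ⟨And.right, fun h => ⟨h ▸ rfl, h⟩⟩

end Finset

section Configurations

variable {V : Type*} [Fintype V] [DecidableEq V]

theorem natCard_sum_eq_and_negPart_mem (D : Finset (V → ℕ)) (m : ℕ) :
    Nat.card {ξ : V → ℤ // ∑ z, ξ z = m ∧ (fun z => (-ξ z).toNat) ∈ D} =
      ∑ q ∈ D, (#{z | q z = 0}).multichoose (m + ∑ z, q z) := by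
  simp_rw [← card_piAntidiag_nat, ← card_sigma, ← Nat.card_eq_finsetCard]
  have hdisj : ∀ (q p : V → ℕ) (n : ℕ), p ∈ piAntidiag {z | q z = 0} n →
      ∀ z, p z = 0 ∨ q z = 0 := fun _ _ _ hp z =>
    or_iff_not_imp_left.2 fun h => (mem_filter.1 ((mem_piAntidiag.1 hp).2 z h)).2
  refine Nat.card_congr
    { toFun := fun ξ => ⟨⟨fun z => (-ξ.1 z).toNat, fun z => (ξ.1 z).toNat⟩, ?_⟩
      invFun := fun x => ⟨fun z => x.1.2 z - x.1.1 z, ?_⟩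
      left_inv := ?_
      right_inv := ?_ }
  · obtain ⟨ξ, hsum, hD⟩ := ξ
    simp only [mem_sigma, mem_piAntidiag, mem_filter, mem_univ, true_and]
    refine ⟨hD, ?_, fun z hz => by omega⟩
    rw [sum_filter_of_ne fun z _ hz => by omega]
    zify
    rw [← hsum, ← sum_add_distrib]
    exact sum_congr rfl fun z _ => by omega
  · obtain ⟨⟨q, p⟩, hx⟩ := x
    obtain ⟨hD, hp⟩ := mem_sigma.1 hx
    have hpsum := (mem_piAntidiag.1 hp).1
    dsimp only at hpsum ⊢
    refine ⟨?_, ?_⟩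
    · rw [sum_filter_of_ne fun z _ hz => (hdisj q p _ hp z).resolve_left hz] at hpsum
      rw [sum_sub_distrib]
      have : (∑ z, p z : ℤ) = m + ∑ z, q z := by exact_mod_cast hpsum
      linarith
    · convert hD using 1
      funext z
      dsimp only
      have := hdisj q p _ hp z
      omega
  · rintro ⟨ξ, -⟩
    ext z
    simp only
    omega
  · rintro ⟨⟨q, p⟩, hx⟩
    obtain ⟨-, hp⟩ := mem_sigma.1 hx
    refine Subtype.ext (Sigma.ext (funext fun z => ?_) (heq_of_eq (funext fun z => ?_))) <;>
      · have := hdisj q p _ hp z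
        dsimp only
        omega

end Configurations

def Equiv.curryFibers {α κ : Type*} (f : α → κ) (β : Type*) :
    (α → β) ≃ ∀ k, {a // f a = k} → β where
  toFun g k a := g a
  invFun G a := G (f a) ⟨a, rfl⟩
  left_inv _ := rfl
  right_inv G := by
    funext k ⟨a, ha⟩
    subst ha
    rfl

@[simp]
theorem Equiv.curryFibers_apply {α κ : Type*} (f : α → κ) (β : Type*) (g : α → β)
    (k : κ) (a : {a // f a = k}) : curryFibers f β g k a = g a := rfl

@[simp]
theorem Equiv.curryFibers_symm_apply_coe {α κ : Type*} (f : α → κ) (β : Type*)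
    (G : ∀ k, {a // f a = k} → β) {k : κ} (a : {a // f a = k}) :
    (curryFibers f β).symm G a = G k a := by
  obtain ⟨a, rfl⟩ := a
  rfl

def debtVectors (β : Type*) [Fintype β] [DecidableEq β] (r : ℕ) : Finset (β → ℕ) :=
  (range (r + 1)).biUnion fun a => univ.piAntidiag a

@[simp]
theorem mem_debtVectors {β : Type*} [Fintype β] [DecidableEq β] {r : ℕ} {f : β → ℕ} :
    f ∈ debtVectors β r ↔ ∑ x, f x ≤ r := by
  simp [debtVectors]

section Banks

variable {V : Type*} [Fintype V] {K : ℕ}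

theorem bankDebt_eq_neg_sum (bank : V → Fin K) (ξ : V → ℤ) (i : Fin K) :
    bankDebt bank ξ i = -∑ z : {z // bank z = i}, ((-ξ z).toNat : ℤ) := by
  rw [bankDebt, sum_subtype (p := fun z => bank z = i) _ fun z => by simp, ← sum_neg_distrib]
  exact sum_congr rfl fun z _ => by omega

variable [DecidableEq V]

theorem natCard_admissible_eq_sum (bank : V → Fin K) (R : Fin K → ℕ) (M : ℕ) :
    Nat.card {ξ : V → ℤ // admissible bank R M ξ} =
      ∑ F ∈ Fintype.piFinset fun i => debtVectors {z // bank z = i} (R i),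
        (Fintype.card V - ∑ i, #{z | F i z ≠ 0}).multichoose (M + ∑ i, ∑ z, F i z) := by
  set e := Equiv.curryFibers bank ℕ
  have hadm : ∀ ξ : V → ℤ, admissible bank R M ξ ↔ ∑ z, ξ z = M ∧
      (fun z => (-ξ z).toNat) ∈
        (Fintype.piFinset fun i => debtVectors _ (R i)).map e.symm.toEmbedding := by
    intro ξ
    simp only [admissible, bankDebt_eq_neg_sum, mem_map_equiv, Equiv.symm_symm,
      Fintype.mem_piFinset, mem_debtVectors, e, Equiv.curryFibers_apply]
    refine and_congr_right fun _ => forall_congr' fun i => ?_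
    rw [neg_le_neg_iff]
    exact_mod_cast Iff.rfl
  rw [Nat.card_congr (Equiv.subtypeEquivRight hadm), natCard_sum_eq_and_negPart_mem, sum_map]
  refine sum_congr rfl fun F _ => ?_
  have hsum : ∀ g : V → ℕ, ∑ z, g z = ∑ i, ∑ z : {z // bank z = i}, g z := fun g =>
    (Fintype.sum_fiberwise bank g).symm
  have hzero := card_filter_add_card_filter_not (s := univ) fun z => e.symm F z = 0
  simp only [card_filter, card_univ] at hzero
  simp only [card_filter, hsum, ne_eq, Equiv.toEmbedding_apply, e,
    Equiv.curryFibers_symm_apply_coe] at hzero ⊢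
  congr 1
  omega

end Banks

section Profiles

variable {κ : Type*} [Fintype κ] [DecidableEq κ] {β : κ → Type*} [∀ k, Fintype (β k)]
  [∀ k, DecidableEq (β k)]

theorem card_filter_piFinset_debtVectors_profile (r a b : κ → ℕ) (ha : ∀ k, a k ≤ r k) :
    #{F ∈ Fintype.piFinset fun k => debtVectors (β k) (r k) |
        ((fun k => ∑ x, F k x), fun k => #{x | F k x ≠ 0}) = (a, b)} =
      ∏ k, (Fintype.card (β k)).choose (b k) * ccat (a k) (b k) := by
  have hfiber : {F ∈ Fintype.piFinset fun k => debtVectors (β k) (r k) |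
        ((fun k => ∑ x, F k x), fun k => #{x | F k x ≠ 0}) = (a, b)} =
      Fintype.piFinset fun k =>
        {f ∈ (univ : Finset (β k)).piAntidiag (a k) | #{x | f x ≠ 0} = b k} := by
    ext F
    simp only [mem_filter, Fintype.mem_piFinset, mem_debtVectors, mem_piAntidiag, mem_univ,
      implies_true, and_true, Prod.mk.injEq, funext_iff, ← forall_and]
    exact forall_congr' fun k => ⟨fun h => ⟨h.2.1, h.2.2⟩, fun h => ⟨h.1 ▸ ha k, h⟩⟩
  rw [hfiber, Fintype.card_piFinset]
  exact prod_congr rfl fun k _ => card_filter_piAntidiag_card_support univ (a k) (b k)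

theorem sum_piFinset_debtVectors (r : κ → ℕ) (H : (κ → ℕ) → (κ → ℕ) → ℕ) :
    ∑ F ∈ Fintype.piFinset (fun k => debtVectors (β k) (r k)),
        H (fun k => ∑ x, F k x) (fun k => #{x | F k x ≠ 0}) =
      ∑ a ∈ Fintype.piFinset fun k => range (r k + 1),
        ∑ b ∈ Fintype.piFinset fun k => range (Fintype.card (β k) + 1),
          (∏ k, (Fintype.card (β k)).choose (b k) * ccat (a k) (b k)) * H a b := by
  have hmaps : ∀ F ∈ Fintype.piFinset fun k => debtVectors (β k) (r k),
      ((fun k => ∑ x, F k x), fun k => #{x | F k x ≠ 0}) ∈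
        (Fintype.piFinset fun k => range (r k + 1)) ×ˢ
          Fintype.piFinset fun k => range (Fintype.card (β k) + 1) := by
    intro F hF
    simp only [Fintype.mem_piFinset, mem_debtVectors, mem_product, mem_range] at hF ⊢
    exact ⟨fun k => Nat.lt_succ_of_le (hF k), fun k => Nat.lt_succ_of_le (card_filter_le _ _)⟩
  rw [← sum_product', ← sum_fiberwise_of_maps_to hmaps]
  refine sum_congr rfl fun ab hab => ?_
  rw [sum_congr rfl fun F hF => congrArg (fun p => H p.1 p.2) (mem_filter.1 hF).2, sum_const,
    smul_eq_mul, card_filter_piFinset_debtVectors_profile]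
  simp only [mem_product, Fintype.mem_piFinset, mem_range] at hab
  exact fun k => Nat.le_of_lt_succ (hab.1 k)

end Profiles

theorem prod_mul_multichoose_eq_prod_mul_chooseZ {κ : Type*} [Fintype κ] (n a b : κ → ℕ)
    (M : ℕ) (hn : ∑ k, n k ≠ 0) :
    (∏ k, (n k).choose (b k) * ccat (a k) (b k)) *
        (∑ k, n k - ∑ k, b k).multichoose (M + ∑ k, a k) =
      (∏ k, (n k).choose (b k) * ccat (a k) (b k)) *
        chooseZ ((M : ℤ) + ∑ k, (a k : ℤ) + ∑ k, (n k : ℤ) - ∑ k, (b k : ℤ) - 1)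
          (∑ k, (n k : ℤ) - ∑ k, (b k : ℤ) - 1) := by
  rcases eq_or_ne (∏ k, (n k).choose (b k) * ccat (a k) (b k)) 0 with h0 | h0
  · rw [h0, zero_mul, zero_mul]
  have hfac := fun k => mul_ne_zero_iff.1 (prod_ne_zero_iff.1 h0 k (mem_univ k))
  have hbn : ∑ k, b k ≤ ∑ k, n k :=
    sum_le_sum fun k _ => (Nat.choose_ne_zero_iff.1 (hfac k).1)
  have hba : ∑ k, b k ≤ ∑ k, a k := sum_le_sum fun k _ => le_of_ccat_ne_zero (hfac k).2
  -- if all customers are indebted, then `M + ∑ a ≥ ∑ b = ∑ n > 0` and both sides vanish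
  rw [multichoose_eq_chooseZ (by omega)]
  push_cast [Nat.cast_sub hbn]
  ring_nf

theorem card_configurations_general {V : Type*} [Fintype V] {K : ℕ}
    (hN : 2 ≤ Fintype.card V)
    (bank : V → Fin K) (R : Fin K → ℕ) (M : ℕ) :
    Nat.card {ξ : V → ℤ // admissible bank R M ξ}
      = Lambda (fun i => (Finset.univ.filter fun z => bank z = i).card) R (M : ℤ) := by
  have hcard : Fintype.card V = ∑ i, #{z | bank z = i} :=
    card_eq_sum_card_fiberwise fun z _ => mem_univ (bank z)
  rw [natCard_admissible_eq_sum, Lambda, sum_piFinset_debtVectors R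
    fun a b => (Fintype.card V - ∑ i, b i).multichoose (M + ∑ i, a i)]
  simp only [Fintype.card_subtype, hcard]
  exact sum_congr rfl fun a _ => sum_congr rfl fun b _ =>
    prod_mul_multichoose_eq_prod_mul_chooseZ _ a b M (by omega)

theorem card_configurations {V : Type*} [Fintype V] [DecidableEq V] {K : ℕ} (hK : 1 ≤ K)
    (G : SimpleGraph V) (hG : G.Connected) (hN : 2 ≤ Fintype.card V)
    (bank : V → Fin K) (R : Fin K → ℕ) (M : ℕ) :
    Nat.card {ξ : V → ℤ // admissible bank R M ξ}
      = Lambda (fun i => (Finset.univ.filter fun z => bank z = i).card) R (M : ℤ) :=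
  card_configurations_general hN bank R M
end

section
/- Let ū ∈ (0, 1), p ∈ (0, 1], and let u : ℤ → ℝ satisfy u_c → 0 as c → +∞ and u_c → 0 as c → −∞. Assume the fixed-point equations ū·(u_{c−1} − u_c) = u_c − u_{c+1} for every integer c ≥ 1, and ū·(u_{c−1} − u_c) = p·(u_c − u_{c+1}) for every integer c ≤ −1. Then u_c = u₀·ū^c for all integers c ≥ 0, and u_c = u₀·(ū/p)^c for all integers c ≤ 0. In particular, if u₀ > 0 then p < ū, so u is an asymmetric Laplace profile: u_c = u₀·e^{−ac} for c ≥ 0 and u_c = u₀·e^{bc} for c ≤ 0, where a = −ln(ū) > 0 and b = ln(ū/p) > 0. -/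
/-!
On each side of `0` the recurrence is a telescoping identity: it says that `u (c + 1) - r * u c`
does not depend on `c`. Letting `c → ∞` shows that this conserved quantity vanishes, so `u` is
geometric with ratio `r`. For `c ≤ 0`, reflecting `c ↦ -c` turns the second recurrence into the
first one with ratio `p / ū`; decay at `-∞` then forces `p / ū < 1` as soon as `u 0 ≠ 0`.
-/

open Filter

theorem geometric_of_recurrence_of_tendsto_zero {r : ℝ} {u : ℤ → ℝ}
    (htop : Tendsto u atTop (nhds 0))
    (hrec : ∀ c : ℤ, 1 ≤ c → r * (u (c - 1) - u c) = u c - u (c + 1)) (n : ℕ) :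
    u n = u 0 * r ^ n := by
  have hconst : ∀ n : ℕ, u (n + 1) - r * u n = u 1 - r * u 0 := by
    intro n
    induction n with
    | zero => simp
    | succ k ih =>
      have h := hrec (k + 1) (by omega)
      push_cast at h ⊢
      simp only [add_sub_cancel_right] at h
      linarith
  have hzero : u 1 - r * u 0 = 0 := by
    have hu : Tendsto (fun n : ℕ => u n) atTop (nhds 0) :=
      htop.comp tendsto_natCast_atTop_atTop
    have hlim := (hu.comp (tendsto_add_atTop_nat 1)).sub (hu.const_mul r)
    simp only [mul_zero, sub_zero, Function.comp_def, Nat.cast_add, Nat.cast_one, hconst] at hlim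
    exact tendsto_const_nhds_iff.mp hlim
  induction n with
  | zero => simp
  | succ k ih =>
    have h := hconst k
    rw [pow_succ, ← mul_assoc, ← ih]
    push_cast
    linarith

theorem abs_lt_one_of_tendsto_const_mul_pow_zero {a r : ℝ} (ha : a ≠ 0)
    (h : Tendsto (fun n : ℕ => a * r ^ n) atTop (nhds 0)) : |r| < 1 := by
  rw [← tendsto_pow_atTop_nhds_zero_iff]
  simpa [ha] using h.const_mul a⁻¹

theorem zpow_eq_exp_log_mul {x : ℝ} (hx : 0 < x) (c : ℤ) :
    x ^ c = Real.exp (Real.log x * c) := by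
  rw [← Real.rpow_intCast, Real.rpow_def_of_pos hx]

theorem fixed_point_laplace_general (ub p : ℝ) (hub0 : 0 < ub) (hub1 : ub < 1)
    (hp0 : 0 < p) (u : ℤ → ℝ)
    (htop : Tendsto u atTop (nhds 0)) (hbot : Tendsto u atBot (nhds 0))
    (hpos : ∀ c : ℤ, 1 ≤ c → ub * (u (c - 1) - u c) = u c - u (c + 1))
    (hneg : ∀ c : ℤ, c ≤ -1 → ub * (u (c - 1) - u c) = p * (u c - u (c + 1))) :
    (∀ c : ℤ, 0 ≤ c → u c = u 0 * ub ^ c) ∧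
    (∀ c : ℤ, c ≤ 0 → u c = u 0 * (ub / p) ^ c) ∧
    (0 < u 0 →
      p < ub ∧ 0 < -Real.log ub ∧ 0 < Real.log (ub / p) ∧
      (∀ c : ℤ, 0 ≤ c → u c = u 0 * Real.exp (-(-Real.log ub) * (c : ℝ))) ∧
      (∀ c : ℤ, c ≤ 0 → u c = u 0 * Real.exp (Real.log (ub / p) * (c : ℝ)))) := by
  have hright (n : ℕ) : u n = u 0 * ub ^ n :=
    geometric_of_recurrence_of_tendsto_zero htop hpos n
  have hleft (n : ℕ) : u (-n) = u 0 * (p / ub) ^ n := by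
    refine geometric_of_recurrence_of_tendsto_zero (u := fun c => u (-c))
      (hbot.comp tendsto_neg_atTop_atBot) (fun c hc => ?_) n
    have h := hneg (-c) (by omega)
    rw [show -c - 1 = -(c + 1) by ring, show -c + 1 = -(c - 1) by ring] at h
    field_simp
    linarith
  have hposform (c : ℤ) (hc : 0 ≤ c) : u c = u 0 * ub ^ c := by
    lift c to ℕ using hc
    simpa using hright c
  have hnegform (c : ℤ) (hc : c ≤ 0) : u c = u 0 * (ub / p) ^ c := by
    obtain ⟨n, rfl⟩ := Int.exists_eq_neg_ofNat hc
    rw [hleft, zpow_neg, zpow_natCast, ← inv_pow, inv_div]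
  refine ⟨hposform, hnegform, fun hu0 => ?_⟩
  have hplt : p < ub := by
    have hlim : Tendsto (fun n : ℕ => u 0 * (p / ub) ^ n) atTop (nhds 0) :=
      (hbot.comp (tendsto_neg_atTop_atBot.comp tendsto_natCast_atTop_atTop)).congr hleft
    have := abs_lt_one_of_tendsto_const_mul_pow_zero hu0.ne' hlim
    rwa [abs_of_pos (div_pos hp0 hub0), div_lt_one hub0] at this
  refine ⟨hplt, neg_pos.mpr (Real.log_neg hub0 hub1),
    Real.log_pos ((one_lt_div hp0).mpr hplt), fun c hc => ?_, fun c hc => ?_⟩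
  · rw [hposform c hc, zpow_eq_exp_log_mul hub0, neg_neg]
  · rw [hnegform c hc, zpow_eq_exp_log_mul (div_pos hub0 hp0)]

/-- Fixed point of the mean-field equations: the equilibrium distribution of
money is an asymmetric Laplace profile. Here `ub` is the equilibrium fraction
of individuals able to give a coin and `p` the equilibrium probability that a
bank is nonempty. -/
theorem fixed_point_laplace (ub p : ℝ) (hub0 : 0 < ub) (hub1 : ub < 1)
    (hp0 : 0 < p) (hp1 : p ≤ 1) (u : ℤ → ℝ)
    (htop : Tendsto u atTop (nhds 0)) (hbot : Tendsto u atBot (nhds 0))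
    (hpos : ∀ c : ℤ, 1 ≤ c → ub * (u (c - 1) - u c) = u c - u (c + 1))
    (hneg : ∀ c : ℤ, c ≤ -1 → ub * (u (c - 1) - u c) = p * (u c - u (c + 1))) :
    (∀ c : ℤ, 0 ≤ c → u c = u 0 * ub ^ c) ∧
    (∀ c : ℤ, c ≤ 0 → u c = u 0 * (ub / p) ^ c) ∧
    (0 < u 0 →
      p < ub ∧ 0 < -Real.log ub ∧ 0 < Real.log (ub / p) ∧
      (∀ c : ℤ, 0 ≤ c → u c = u 0 * Real.exp (-(-Real.log ub) * (c : ℝ))) ∧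
      (∀ c : ℤ, c ≤ 0 → u c = u 0 * Real.exp (Real.log (ub / p) * (c : ℝ)))) :=
  fixed_point_laplace_general ub p hub0 hub1 hp0 u htop hbot hpos hneg
end

section
/- Let μ, a, b > 0, T > 0 and ρ > 0 satisfy the three equations μ/a + μ/b = 1, μ/a² − μ/b² = T, and μ/a² = (1 + ρ)·T. Then μ = (1/T)·(√(1+ρ) − √ρ)², a = (1/T)·(1 − √(ρ/(1+ρ))), and b = (1/T)·(√((1+ρ)/ρ) − 1). -/
set_option maxHeartbeats 800000


/-- Solving the three equations satisfied by the parameters of the equilibrium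
asymmetric Laplace distribution of money. -/
theorem laplace_parameters (μ a b T ρ : ℝ) (hμ : 0 < μ) (ha : 0 < a)
    (hb : 0 < b) (hT : 0 < T) (hρ : 0 < ρ)
    (h1 : μ / a + μ / b = 1) (h2 : μ / a ^ 2 - μ / b ^ 2 = T)
    (h3 : μ / a ^ 2 = (1 + ρ) * T) :
    μ = (1 / T) * (Real.sqrt (1 + ρ) - Real.sqrt ρ) ^ 2 ∧
    a = (1 / T) * (1 - Real.sqrt (ρ / (1 + ρ))) ∧
    b = (1 / T) * (Real.sqrt ((1 + ρ) / ρ) - 1) := by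
  have hρ1 : (0:ℝ) < 1 + ρ := by linarith
  set s := Real.sqrt (1 + ρ) with hs
  set r := Real.sqrt ρ with hr
  have hs2 : s ^ 2 = 1 + ρ := Real.sq_sqrt hρ1.le
  have hr2 : r ^ 2 = ρ := Real.sq_sqrt hρ.le
  have hsp : 0 < s := Real.sqrt_pos.mpr hρ1
  have hrp : 0 < r := Real.sqrt_pos.mpr hρ
  have hsr : r < s := by
    have := Real.sqrt_lt_sqrt hρ.le (by linarith : ρ < 1 + ρ)
    simpa [hs, hr] using this
  have hdiv1 : Real.sqrt (ρ / (1 + ρ)) = r / s := Real.sqrt_div hρ.le _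
  have hdiv2 : Real.sqrt ((1 + ρ) / ρ) = s / r := Real.sqrt_div hρ1.le _
  -- algebraic core
  have h4 : μ / b ^ 2 = ρ * T := by linarith
  have hma : μ = a ^ 2 * (s ^ 2 * T) := by
    rw [hs2]; field_simp at h3; linarith
  have hmb : μ = b ^ 2 * (r ^ 2 * T) := by
    rw [hr2]; field_simp at h4; linarith
  have hasbr : a * s = b * r := by
    have heq : a ^ 2 * (s ^ 2 * T) = b ^ 2 * (r ^ 2 * T) := hma.symm.trans hmb
    have hsq : (a * s) ^ 2 = (b * r) ^ 2 :=
      mul_right_cancel₀ hT.ne' (by linear_combination heq)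
    nlinarith [hsq, sq_nonneg (a * s - b * r), mul_pos ha hsp, mul_pos hb hrp]
  have h1' : a * s ^ 2 * T + b * r ^ 2 * T = 1 := by
    have hh : μ / a = a * s ^ 2 * T := by
      rw [hma]; field_simp
    have hh2 : μ / b = b * r ^ 2 * T := by
      rw [hmb]; field_simp
    rw [hh, hh2] at h1; exact h1
  have hsum : s ^ 2 - r ^ 2 = 1 := by rw [hs2, hr2]; ring
  have hkey : a * s * T * (s + r) = 1 := by linear_combination h1' + r * T * hasbr
  have hsrne : s + r ≠ 0 := by positivity
  have hA : a * (s * T) = s - r :=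
    mul_right_cancel₀ hsrne (by linear_combination hkey - hsum)
  have hB : b * (r * T) = s - r :=
    mul_right_cancel₀ hsrne (by linear_combination hkey - hsum - T * (s + r) * hasbr)
  refine ⟨?_, ?_, ?_⟩
  · field_simp
    linear_combination T * hma + (a * s * T + s - r) * hA
  · rw [hdiv1]
    field_simp
    linear_combination hA
  · rw [hdiv2]
    field_simp
    linear_combination hB
end
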